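/- arXiv:2212.14665 — 3 statements merged into one kernel-verified Lean document; each statement's English description precedes it below -/
import Mathlib

section
/- For g̃(ζ) = max_{π ∈ V} (πᵀBζ + πᵀD) with V finite and nonempty, the minimum Lipschitz constant of g̃ with respect to the 1-norm on ℝ^M equals max_{π ∈ V} ‖Bᵀπ‖_∞. -/
open Matrix

/-- Claim 4 (variant): the minimum Lipschitz constant of
`g̃(ζ) = max_{π ∈ V} (πᵀBζ + πᵀD)` with respect to the 1-norm equals
`max_{π ∈ V} ‖Bᵀπ‖_∞`. -/
theorem min_lipschitz_eq_max_norm (m M : ℕ) (B : Matrix (Fin m) (Fin M) ℝ)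
    (D : Fin m → ℝ) (V : Finset (Fin m → ℝ)) (hV : V.Nonempty)
    (g : (Fin M → ℝ) → ℝ)
    (hg : ∀ ζ : Fin M → ℝ, g ζ = V.sup' hV fun π => π ⬝ᵥ B.mulVec ζ + π ⬝ᵥ D) :
    sInf {L : ℝ | 0 ≤ L ∧ ∀ ζ ζ' : Fin M → ℝ,
        |g ζ - g ζ'| ≤ L * ∑ i, |ζ i - ζ' i|} =
      V.sup' hV fun π => ‖B.transpose.mulVec π‖ := by
  set w : (Fin m → ℝ) → (Fin M → ℝ) := fun π => B.transpose.mulVec π with hw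
  have hdot : ∀ (π : Fin m → ℝ) (ζ : Fin M → ℝ), π ⬝ᵥ B.mulVec ζ = w π ⬝ᵥ ζ := by
    intro π ζ
    simp only [hw]
    rw [Matrix.dotProduct_mulVec, Matrix.mulVec_transpose]
  set Lstar : ℝ := V.sup' hV fun π => ‖w π‖ with hLs
  obtain ⟨π₀, hπ₀⟩ := id hV
  have hLnn : 0 ≤ Lstar := by
    rw [hLs]
    exact le_trans (norm_nonneg (w π₀)) (Finset.le_sup' (fun π => ‖w π‖) hπ₀)
  -- each |w π i| ≤ Lstar for π ∈ V
  have hwle : ∀ π ∈ V, ∀ i, |w π i| ≤ Lstar := by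
    intro π hπ i
    calc |w π i| = ‖w π i‖ := (Real.norm_eq_abs _).symm
    _ ≤ ‖w π‖ := norm_le_pi_norm (w π) i
    _ ≤ Lstar := by rw [hLs]; exact Finset.le_sup' (fun π => ‖w π‖) hπ
  -- Lstar is a Lipschitz constant
  have hmem : Lstar ∈ {L : ℝ | 0 ≤ L ∧ ∀ ζ ζ' : Fin M → ℝ,
      |g ζ - g ζ'| ≤ L * ∑ i, |ζ i - ζ' i|} := by
    refine ⟨hLnn, ?_⟩
    have key : ∀ ζ ζ' : Fin M → ℝ, g ζ - g ζ' ≤ Lstar * ∑ i, |ζ i - ζ' i| := by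
      intro ζ ζ'
      rw [hg ζ, hg ζ', sub_le_iff_le_add, Finset.sup'_le_iff]
      intro π hπ
      have hdiff : (π ⬝ᵥ B.mulVec ζ + π ⬝ᵥ D) - (π ⬝ᵥ B.mulVec ζ' + π ⬝ᵥ D)
          = ∑ i, w π i * (ζ i - ζ' i) := by
        rw [hdot, hdot]
        simp [dotProduct, mul_sub, Finset.sum_sub_distrib]
      have hbnd : ∑ i, w π i * (ζ i - ζ' i) ≤ Lstar * ∑ i, |ζ i - ζ' i| := by
        rw [Finset.mul_sum]
        refine Finset.sum_le_sum fun i _ => ?_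
        calc w π i * (ζ i - ζ' i) ≤ |w π i * (ζ i - ζ' i)| := le_abs_self _
        _ = |w π i| * |ζ i - ζ' i| := abs_mul _ _
        _ ≤ Lstar * |ζ i - ζ' i| := by
            exact mul_le_mul_of_nonneg_right (hwle π hπ i) (abs_nonneg _)
      have hle : π ⬝ᵥ B.mulVec ζ' + π ⬝ᵥ D ≤ V.sup' ⟨π₀, hπ₀⟩
          (fun π => π ⬝ᵥ B.mulVec ζ' + π ⬝ᵥ D) :=
        Finset.le_sup' (fun π => π ⬝ᵥ B.mulVec ζ' + π ⬝ᵥ D) hπ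
      linarith
    intro ζ ζ'
    rw [abs_sub_le_iff]
    constructor
    · exact key ζ ζ'
    · have := key ζ' ζ
      have hsum : ∑ i, |ζ' i - ζ i| = ∑ i, |ζ i - ζ' i| := by
        refine Finset.sum_congr rfl fun i _ => abs_sub_comm _ _
      linarith [hsum ▸ this]
  -- Lstar is a lower bound on Lipschitz constants
  have hlb : ∀ L ∈ {L : ℝ | 0 ≤ L ∧ ∀ ζ ζ' : Fin M → ℝ,
      |g ζ - g ζ'| ≤ L * ∑ i, |ζ i - ζ' i|}, Lstar ≤ L := by
    rintro L ⟨hL0, hLip⟩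
    refine Finset.sup'_le _ _ fun π hπ => ?_
    rw [pi_norm_le_iff_of_nonneg hL0]
    intro j
    rw [Real.norm_eq_abs]
    by_contra hcon
    push_neg at hcon
    set ε : ℝ := |w π j| - L with hε
    have hεpos : 0 < ε := by simp [hε]; linarith
    set C : ℝ := g 0 - π ⬝ᵥ D with hC
    have hC0 : 0 ≤ C := by
      have : π ⬝ᵥ D ≤ g 0 := by
        rw [hg 0]
        have := Finset.le_sup' (f := fun π => π ⬝ᵥ B.mulVec 0 + π ⬝ᵥ D) hπ
        simpa [-Finset.le_sup'_iff] using this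
      linarith
    have hge : ∀ s : ℝ, s * w π j + π ⬝ᵥ D ≤ g (Pi.single j s) := by
      intro s
      rw [hg]
      have h1 := Finset.le_sup'
        (f := fun π => π ⬝ᵥ B.mulVec (Pi.single j s) + π ⬝ᵥ D) hπ
      have h2 : π ⬝ᵥ B.mulVec (Pi.single j s) = s * w π j := by
        rw [hdot]
        simp [dotProduct, Pi.single_apply, mul_comm]
      rw [h2] at h1
      exact h1
    have hsum : ∀ s : ℝ, (∑ i, |(Pi.single j s : Fin M → ℝ) i - (0 : Fin M → ℝ) i|) = |s| := by
      intro s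
      simp [Pi.single_apply, apply_ite abs]
    have hbound : ∀ t : ℝ, 0 < t → t * |w π j| ≤ L * t + C := by
      intro t ht
      have h1 := hLip (Pi.single j t) 0
      have h2 := hLip (Pi.single j (-t)) 0
      rw [hsum t, abs_of_pos ht] at h1
      rw [hsum (-t), abs_neg, abs_of_pos ht] at h2
      have g1 : g (Pi.single j t) ≤ g 0 + L * t := by
        have := abs_sub_le_iff.mp h1
        linarith [this.1]
      have g2 : g (Pi.single j (-t)) ≤ g 0 + L * t := by
        have := abs_sub_le_iff.mp h2
        linarith [this.1]
      have e1 := (hge t).trans g1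
      have e2 := (hge (-t)).trans g2
      rcases abs_cases (w π j) with ⟨h, _⟩ | ⟨h, _⟩
      · rw [h]; linarith
      · rw [h]; nlinarith
    have hfin := hbound ((C + 1) / ε) (by positivity)
    have : (C + 1) / ε * ε = C + 1 := div_mul_cancel₀ _ (ne_of_gt hεpos)
    nlinarith [hbound ((C + 1) / ε) (by positivity)]
  exact le_antisymm (csInf_le ⟨Lstar, hlb⟩ hmem) (le_csInf ⟨Lstar, hmem⟩ hlb)
end

section
/- If θ does not belong to the convex hull of the finite set { Bᵀπ : π ∈ V }, then sup_{ζ ∈ ℝ^M} ( θᵀζ − max_{π ∈ V}(πᵀBζ + πᵀD) ) = +∞. -/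
open Matrix

/-- If `θ` is not in the convex hull of `{Bᵀπ : π ∈ V}`, then
`sup_ζ (θᵀζ − max_{π ∈ V}(πᵀBζ + πᵀD)) = +∞` (the set is unbounded above). -/
theorem conjugate_infinite_outside_hull (m M : ℕ) (B : Matrix (Fin m) (Fin M) ℝ)
    (D : Fin m → ℝ) (V : Finset (Fin m → ℝ)) (hV : V.Nonempty)
    (θ : Fin M → ℝ)
    (hθ : θ ∉ convexHull ℝ ((fun π => B.transpose.mulVec π) '' (V : Set (Fin m → ℝ)))) :
    ¬ BddAbove (Set.range fun ζ : Fin M → ℝ =>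
        θ ⬝ᵥ ζ - V.sup' hV fun π => π ⬝ᵥ B.mulVec ζ + π ⬝ᵥ D) := by
  intro hbdd
  obtain ⟨c, hc⟩ := hbdd
  set S := (fun π => B.transpose.mulVec π) '' (V : Set (Fin m → ℝ)) with hS
  have hSfin : S.Finite := V.finite_toSet.image _
  have hclosed : IsClosed (convexHull ℝ S) := hSfin.isClosed_convexHull (𝕜 := ℝ)
  obtain ⟨f, u, hfu, hθu⟩ :=
    geometric_hahn_banach_closed_point (convex_convexHull ℝ S) hclosed hθ
  set w : Fin M → ℝ := fun i => f (fun j => if i = j then 1 else 0) with hw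
  have hf : ∀ y : Fin M → ℝ, f y = y ⬝ᵥ w := by
    intro y
    conv_lhs => rw [pi_eq_sum_univ y]
    simp [dotProduct, hw, Finset.mul_sum, smul_eq_mul]
  -- each π ∈ V gives π ⬝ᵥ B.mulVec w < u
  have key : ∀ π ∈ V, π ⬝ᵥ B.mulVec w < u := by
    intro π hπ
    have hmem : B.transpose.mulVec π ∈ convexHull ℝ S :=
      subset_convexHull ℝ S ⟨π, by exact_mod_cast hπ, rfl⟩
    have := hfu _ hmem
    rw [hf] at this
    calc π ⬝ᵥ B.mulVec w = B.vecMul π ⬝ᵥ w := by rw [dotProduct_mulVec]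
      _ = B.transpose.mulVec π ⬝ᵥ w := by rw [Matrix.mulVec_transpose]
      _ < u := this
  set C := V.sup' hV (fun π => π ⬝ᵥ D) with hC
  have hε : 0 < f θ - u := sub_pos.mpr hθu
  set t : ℝ := (|c + C| + 1) / (f θ - u) with ht
  have ht0 : 0 < t := div_pos (by positivity) hε
  have hval : t * (f θ - u) = |c + C| + 1 := div_mul_cancel₀ _ (ne_of_gt hε)
  have hin : θ ⬝ᵥ (t • w) - V.sup' hV (fun π => π ⬝ᵥ B.mulVec (t • w) + π ⬝ᵥ D) ≤ c :=
    hc ⟨t • w, rfl⟩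
  have hsup : V.sup' hV (fun π => π ⬝ᵥ B.mulVec (t • w) + π ⬝ᵥ D) ≤ t * u + C := by
    apply Finset.sup'_le
    intro π hπ
    have h1 : π ⬝ᵥ B.mulVec (t • w) = t * (π ⬝ᵥ B.mulVec w) := by
      rw [Matrix.mulVec_smul, dotProduct_smul, smul_eq_mul]
    have h2 : t * (π ⬝ᵥ B.mulVec w) ≤ t * u :=
      mul_le_mul_of_nonneg_left (le_of_lt (key π hπ)) (le_of_lt ht0)
    have h3 : π ⬝ᵥ D ≤ C := by rw [hC]; exact Finset.le_sup' (fun π => π ⬝ᵥ D) hπ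
    rw [h1]; linarith
  have hθt : θ ⬝ᵥ (t • w) = t * f θ := by
    rw [dotProduct_smul, smul_eq_mul, hf θ]
  have habs : c + C ≤ |c + C| := le_abs_self _
  nlinarith [hin, hsup, hθt, hval]
end

section
/- Let g be a finite maximum of affine functions on ℝ^M and V a finite index set; define Ṽ = { π ∈ V : Ξ_π contains a nonempty open set }, where Ξ_π is the set where the π-th affine piece is active on a convex set Ξ with nonempty interior. If each Ξ_π with positive Lebesgue measure contains an open set, then the union ∪_{π ∈ Ṽ} Ξ_π has full Lebesgue measure in Ξ, and consequently max_{π ∈ Ṽ}(πᵀBζ + πᵀD) = g(ζ) for all ζ ∈ Ξ by continuity. -/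
open Matrix MeasureTheory

lemma aux_subset_closure_interior {E : Type*} [AddCommGroup E] [Module ℝ E]
    [TopologicalSpace E] [IsTopologicalAddGroup E] [ContinuousSMul ℝ E]
    {s : Set E} (hs : Convex ℝ s) (h : (interior s).Nonempty) :
    s ⊆ closure (interior s) := by
  obtain ⟨y, hy⟩ := h
  intro x hx
  have htend : Filter.Tendsto (fun n : ℕ => x + (1 / (n + 1) : ℝ) • (y - x))
      Filter.atTop (nhds x) := by
    have h0 : Filter.Tendsto (fun n : ℕ => (1 / (n + 1) : ℝ)) Filter.atTop (nhds 0) :=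
      tendsto_one_div_add_atTop_nhds_zero_nat
    have := (h0.smul_const (y - x)).const_add x
    simpa using this
  refine mem_closure_of_tendsto htend (Filter.Eventually.of_forall fun n => ?_)
  refine hs.add_smul_sub_mem_interior hx hy ⟨?_, ?_⟩
  · positivity
  · rw [div_le_one (by positivity)]
    have : (0:ℝ) ≤ (n:ℝ) := Nat.cast_nonneg n
    linarith

/-- Claim 2: the union of the active-piece sets `Ξ_π` over the pieces `π ∈ Ṽ`
whose active sets contain a nonempty open set has full Lebesgue measure in
`Ξ`, and consequently `max_{π ∈ Ṽ}(πᵀBζ + πᵀD) = g(ζ)` on `Ξ`. -/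
theorem full_measure_pieces_determine_max (m M : ℕ)
    (B : Matrix (Fin m) (Fin M) ℝ) (D : Fin m → ℝ)
    (V : Finset (Fin m → ℝ)) (hV : V.Nonempty)
    (Ξ : Set (Fin M → ℝ)) (hΞconv : Convex ℝ Ξ) (hΞint : (interior Ξ).Nonempty)
    (g : (Fin M → ℝ) → ℝ)
    (hg : ∀ ζ ∈ Ξ, g ζ = V.sup' hV fun π => π ⬝ᵥ B.mulVec ζ + π ⬝ᵥ D)
    (Xi : (Fin m → ℝ) → Set (Fin M → ℝ))
    (hXi : ∀ π, Xi π = {ζ ∈ Ξ | g ζ = π ⬝ᵥ B.mulVec ζ + π ⬝ᵥ D})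
    (Vt : Set (Fin m → ℝ))
    (hVt : Vt = {π ∈ (V : Set (Fin m → ℝ)) |
      ∃ U : Set (Fin M → ℝ), IsOpen U ∧ U.Nonempty ∧ U ⊆ Xi π})
    (hmeas : ∀ π ∈ V, 0 < volume (Xi π) →
      ∃ U : Set (Fin M → ℝ), IsOpen U ∧ U.Nonempty ∧ U ⊆ Xi π) :
    volume (Ξ \ ⋃ π ∈ Vt, Xi π) = 0 ∧
      ∀ ζ ∈ Ξ, IsGreatest {t : ℝ | ∃ π ∈ Vt, t = π ⬝ᵥ B.mulVec ζ + π ⬝ᵥ D} (g ζ) := by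
  classical
  set f : (Fin m → ℝ) → (Fin M → ℝ) → ℝ := fun π ζ => π ⬝ᵥ B.mulVec ζ + π ⬝ᵥ D with hfdef
  have hcont : ∀ π, Continuous (f π) := by
    intro π
    have : Continuous fun ζ : Fin M → ℝ => π ⬝ᵥ B.mulVec ζ := by
      unfold dotProduct Matrix.mulVec
      exact continuous_finset_sum _ fun i _ =>
        (continuous_const.mul (continuous_finset_sum _ fun j _ =>
          continuous_const.mul (continuous_apply j)))
    exact this.add continuous_const
  have hVtV : Vt ⊆ (V : Set (Fin m → ℝ)) := by
    intro π hπ; rw [hVt] at hπ; exact hπ.1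
  -- null pieces
  have hnull : ∀ π ∈ V, π ∉ Vt → volume (Xi π) = 0 := by
    intro π hπV hπVt
    by_contra h
    have hpos : 0 < volume (Xi π) := pos_iff_ne_zero.mpr h
    have := hmeas π hπV hpos
    exact hπVt (by rw [hVt]; exact ⟨hπV, this⟩)
  -- the covered complement
  have hsub : Ξ \ ⋃ π ∈ Vt, Xi π ⊆ ⋃ π ∈ (↑(V.filter (fun π => π ∉ Vt)) : Set _), Xi π := by
    rintro ζ ⟨hζΞ, hζn⟩
    obtain ⟨π, hπV, hπmax⟩ := Finset.exists_mem_eq_sup' hV (fun π => f π ζ)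
    have hζπ : ζ ∈ Xi π := by
      rw [hXi]
      exact ⟨hζΞ, by rw [hg ζ hζΞ]; exact hπmax⟩
    have hπnotVt : π ∉ Vt := by
      intro hπVt
      exact hζn (Set.mem_biUnion hπVt hζπ)
    exact Set.mem_biUnion (by simp [Finset.mem_filter, hπV, hπnotVt]) hζπ
  have hN0 : volume (Ξ \ ⋃ π ∈ Vt, Xi π) = 0 := by
    refine measure_mono_null hsub ?_
    refine (measure_biUnion_null_iff (Finset.countable_toSet _)).mpr ?_
    intro π hπ
    simp only [Finset.coe_filter, Set.mem_setOf_eq] at hπ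
    exact hnull π hπ.1 hπ.2
  -- Vt' nonempty
  set Vt' : Finset (Fin m → ℝ) := V.filter (fun π => π ∈ Vt) with hVt'def
  have hΞpos : 0 < volume Ξ :=
    lt_of_lt_of_le (isOpen_interior.measure_pos volume hΞint) (measure_mono interior_subset)
  have hVt'ne : Vt'.Nonempty := by
    by_contra h
    have hVtempty : Vt = ∅ := by
      ext π
      simp only [Set.mem_empty_iff_false, iff_false]
      intro hπ
      exact h ⟨π, Finset.mem_filter.mpr ⟨hVtV hπ, hπ⟩⟩
    rw [hVtempty] at hN0
    simp only [Set.mem_empty_iff_false, Set.iUnion_of_empty, Set.iUnion_empty,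
      Set.diff_empty] at hN0
    exact absurd hN0 (ne_of_gt hΞpos)
  -- continuous envelopes
  set F : (Fin M → ℝ) → ℝ := fun ζ => V.sup' hV (fun π => f π ζ) with hFdef
  set H : (Fin M → ℝ) → ℝ := fun ζ => Vt'.sup' hVt'ne (fun π => f π ζ) with hHdef
  have hFcont : Continuous F := Continuous.finset_sup'_apply hV fun π _ => hcont π
  have hHcont : Continuous H := Continuous.finset_sup'_apply hVt'ne fun π _ => hcont π
  have hHleF : ∀ ζ, H ζ ≤ F ζ := by
    intro ζ
    refine Finset.sup'_le _ _ fun π hπ => ?_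
    exact Finset.le_sup' (fun π => f π ζ) (Finset.mem_filter.mp hπ).1
  set A : Set (Fin M → ℝ) := {ζ | H ζ = F ζ} with hAdef
  have hAclosed : IsClosed A := isClosed_eq hHcont hFcont
  have hAX : ∀ ζ ∈ Ξ, ζ ∈ ⋃ π ∈ Vt, Xi π → ζ ∈ A := by
    intro ζ hζΞ hζU
    obtain ⟨π, hπVt, hζπ⟩ := Set.mem_iUnion₂.mp hζU
    rw [hXi] at hζπ
    have hgζ : g ζ = f π ζ := hζπ.2
    have hFζ : F ζ = g ζ := (hg ζ hζΞ).symm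
    have hπVt' : π ∈ Vt' := Finset.mem_filter.mpr ⟨hVtV hπVt, hπVt⟩
    have h1 : f π ζ ≤ H ζ := Finset.le_sup' (fun π => f π ζ) hπVt'
    have : F ζ ≤ H ζ := by rw [hFζ, hgζ]; exact h1
    exact le_antisymm (hHleF ζ) this
  have hintA : interior Ξ ⊆ A := by
    intro ζ hζ
    by_contra hζA
    have hUopen : IsOpen (interior Ξ ∩ Aᶜ) := isOpen_interior.inter hAclosed.isOpen_compl
    have hUne : (interior Ξ ∩ Aᶜ).Nonempty := ⟨ζ, hζ, hζA⟩
    have hUsub : interior Ξ ∩ Aᶜ ⊆ Ξ \ ⋃ π ∈ Vt, Xi π := by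
      rintro ζ' ⟨hζ'int, hζ'A⟩
      refine ⟨interior_subset hζ'int, fun hmem => hζ'A (hAX ζ' (interior_subset hζ'int) hmem)⟩
    have := hUopen.measure_pos volume hUne
    exact absurd (measure_mono_null hUsub hN0) (ne_of_gt this)
  have hΞA : Ξ ⊆ A := by
    intro ζ hζ
    have : ζ ∈ closure (interior Ξ) := aux_subset_closure_interior hΞconv hΞint hζ
    have : ζ ∈ closure A := closure_mono hintA this
    rwa [hAclosed.closure_eq] at this
  refine ⟨hN0, ?_⟩
  intro ζ hζΞ
  have hgF : g ζ = F ζ := hg ζ hζΞ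
  have hζA : H ζ = F ζ := hΞA hζΞ
  constructor
  · obtain ⟨π, hπ, hπmax⟩ := Finset.exists_mem_eq_sup' hVt'ne (fun π => f π ζ)
    exact ⟨π, (Finset.mem_filter.mp hπ).2, by rw [hgF, ← hζA]; exact hπmax⟩
  · rintro t ⟨π, hπVt, rfl⟩
    rw [hgF]
    exact Finset.le_sup' (fun π => f π ζ) (Finset.mem_coe.mp (hVtV hπVt))
end
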